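/- arXiv:2102.03401 — 2 statements merged into one kernel-verified Lean document; each statement's English description precedes it below -/
import Mathlib

section
/- With the setup of the previous statement (types θ₁ ≤ … ≤ θ_M, rewards R₁ ≤ … ≤ R_M, powers P*_m as defined, utility U(m, contract k) = θ_m R_k − u₃(κcφ²s̄I + P*_k t̂)), each type m maximizes its utility by choosing its own contract: for all m, k ∈ {1,…,M}, θ_m R_m − u₃(κcφ²s̄I + P*_m t̂) ≥ θ_m R_k − u₃(κcφ²s̄I + P*_k t̂). -/
theorem contract_global_incentive_compatibility
    (M : ℕ) (hM : 1 ≤ M) (θ R P : ℕ → ℝ)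
    (u₃ that κ c φ sbar I : ℝ)
    (hu₃ : 0 < u₃) (hthat : 0 < that) (hκ : 0 < κ) (hc : 0 < c)
    (hφ : 0 < φ) (hsbar : 0 < sbar) (hI : 0 < I)
    (hθpos : 0 < θ 1)
    (hθmono : ∀ m, 1 ≤ m → m < M → θ m ≤ θ (m + 1))
    (hRmono : ∀ m, 1 ≤ m → m < M → R m ≤ R (m + 1))
    (hIR1 : u₃ * (κ * c * φ ^ 2 * sbar * I) ≤ θ 1 * R 1)
    (hP1 : P 1 = (θ 1 * R 1 - u₃ * (κ * c * φ ^ 2 * sbar * I)) / (u₃ * that))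
    (hPrec : ∀ m, 2 ≤ m → m ≤ M →
      P m = P (m - 1) + θ m * (R m - R (m - 1)) / (u₃ * that)) :
    ∀ m k, 1 ≤ m → m ≤ M → 1 ≤ k → k ≤ M →
      θ m * R m - u₃ * (κ * c * φ ^ 2 * sbar * I + P m * that)
        ≥ θ m * R k - u₃ * (κ * c * φ ^ 2 * sbar * I + P k * that) := by
  intro m k hm1 hmM hk1 hkM
  have hmul : (0:ℝ) < u₃ * that := mul_pos hu₃ hthat
  have hmul' : (u₃ * that) ≠ 0 := ne_of_gt hmul
  -- general monotonicity of θ and R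
  have θmono : ∀ a b, 1 ≤ a → a ≤ b → b ≤ M → θ a ≤ θ b := by
    intro a b ha hab hbM
    induction b with
    | zero => omega
    | succ n ih =>
      rcases Nat.eq_or_lt_of_le hab with h | h
      · rw [h]
      · have han : a ≤ n := by omega
        exact le_trans (ih han (by omega)) (hθmono n (by omega) (by omega))
  have Rmono : ∀ a b, 1 ≤ a → a ≤ b → b ≤ M → R a ≤ R b := by
    intro a b ha hab hbM
    induction b with
    | zero => omega
    | succ n ih =>
      rcases Nat.eq_or_lt_of_le hab with h | h
      · rw [h]
      · have han : a ≤ n := by omega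
        exact le_trans (ih han (by omega)) (hRmono n (by omega) (by omega))
  -- adjacent power step
  have Pstep : ∀ j, 1 ≤ j → j + 1 ≤ M →
      u₃ * that * P (j + 1) - u₃ * that * P j = θ (j + 1) * (R (j + 1) - R j) := by
    intro j hj1 hjM
    have h := hPrec (j + 1) (by omega) hjM
    simp only [Nat.add_sub_cancel] at h
    rw [h]
    field_simp
    ring
  set g : ℕ → ℝ := fun j => θ m * R j - u₃ * that * P j with hg
  have step_up : ∀ j, 1 ≤ j → j + 1 ≤ m → g j ≤ g (j + 1) := by
    intro j hj1 hjm
    have hjM : j + 1 ≤ M := le_trans hjm hmM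
    have hp := Pstep j hj1 hjM
    have hθ : θ (j + 1) ≤ θ m := θmono (j + 1) m (by omega) hjm hmM
    have hR : R j ≤ R (j + 1) := hRmono j hj1 (by omega)
    have : g (j + 1) - g j = (θ m - θ (j + 1)) * (R (j + 1) - R j) := by
      simp only [hg]
      linear_combination -hp
    nlinarith [mul_nonneg (sub_nonneg.mpr hθ) (sub_nonneg.mpr hR)]
  have step_down : ∀ j, m ≤ j → j + 1 ≤ M → g (j + 1) ≤ g j := by
    intro j hmj hjM
    have hj1 : 1 ≤ j := le_trans hm1 hmj
    have hp := Pstep j hj1 hjM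
    have hθ : θ m ≤ θ (j + 1) := θmono m (j + 1) hm1 (by omega) hjM
    have hR : R j ≤ R (j + 1) := hRmono j hj1 (by omega)
    have : g (j + 1) - g j = (θ m - θ (j + 1)) * (R (j + 1) - R j) := by
      simp only [hg]
      linear_combination -hp
    nlinarith [mul_nonpos_of_nonpos_of_nonneg (sub_nonpos.mpr hθ) (sub_nonneg.mpr hR)]
  have key : g k ≤ g m := by
    rcases le_total k m with hkm | hmk
    · -- climb up from k to m
      have aux : ∀ d j, 1 ≤ j → j + d = m → g j ≤ g m := by
        intro d
        induction d with
        | zero => intro j hj hjm; simp_all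
        | succ n ih =>
          intro j hj hjm
          have h1 : g j ≤ g (j + 1) := step_up j hj (by omega)
          exact le_trans h1 (ih (j + 1) (by omega) (by omega))
      exact aux (m - k) k hk1 (by omega)
    · -- climb down from k to m
      have aux : ∀ d j, j = m + d → j ≤ M → g j ≤ g m := by
        intro d
        induction d with
        | zero => intro j hj hjM; simp_all
        | succ n ih =>
          intro j hj hjM
          have h1 : g j ≤ g (m + n) := by
            have : j = (m + n) + 1 := by omega
            rw [this]
            exact step_down (m + n) (by omega) (by omega)
          exact le_trans h1 (ih (m + n) rfl (by omega))
      exact aux (k - m) k (by omega) hkM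
  simp only [hg] at key
  have e1 : u₃ * (κ * c * φ ^ 2 * sbar * I + P m * that)
      = u₃ * (κ * c * φ ^ 2 * sbar * I) + u₃ * that * P m := by ring
  have e2 : u₃ * (κ * c * φ ^ 2 * sbar * I + P k * that)
      = u₃ * (κ * c * φ ^ 2 * sbar * I) + u₃ * that * P k := by ring
  rw [e1, e2]
  linarith
end

section
/- Under the setup of Theorem 2, any feasible contract (P', R) with the same reward vector R satisfying the IR condition θ₁R₁ − u₃(κcφ²s̄I + P'₁t̂) ≥ 0 and the IC conditions u₃t̂(P'_m − P'_{m−1}) ≤ θ_m(R_m − R_{m−1}) for all m ≥ 2 must satisfy P'_m ≤ P*_m for all m ∈ {1,…,M}, where P*_m is the power allocation defined in Theorem 2. -/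
theorem contract_power_allocation_optimal
    (M : ℕ) (hM : 1 ≤ M) (θ R P P' : ℕ → ℝ)
    (u₃ that κ c φ sbar I : ℝ)
    (hu₃ : 0 < u₃) (hthat : 0 < that) (hκ : 0 < κ) (hc : 0 < c)
    (hφ : 0 < φ) (hsbar : 0 < sbar) (hI : 0 < I)
    (hθpos : 0 < θ 1)
    (hθmono : ∀ m, 1 ≤ m → m < M → θ m ≤ θ (m + 1))
    (hRmono : ∀ m, 1 ≤ m → m < M → R m ≤ R (m + 1))
    (hIR1 : u₃ * (κ * c * φ ^ 2 * sbar * I) ≤ θ 1 * R 1)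
    (hP1 : P 1 = (θ 1 * R 1 - u₃ * (κ * c * φ ^ 2 * sbar * I)) / (u₃ * that))
    (hPrec : ∀ m, 2 ≤ m → m ≤ M →
      P m = P (m - 1) + θ m * (R m - R (m - 1)) / (u₃ * that))
    (hIR' : 0 ≤ θ 1 * R 1 - u₃ * (κ * c * φ ^ 2 * sbar * I + P' 1 * that))
    (hIC' : ∀ m, 2 ≤ m → m ≤ M →
      u₃ * that * (P' m - P' (m - 1)) ≤ θ m * (R m - R (m - 1))) :
    ∀ m, 1 ≤ m → m ≤ M → P' m ≤ P m := by
  have hut : 0 < u₃ * that := mul_pos hu₃ hthat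
  intro m
  induction m with
  | zero => intro h; omega
  | succ n ih =>
    intro h1 hM'
    rcases Nat.eq_or_lt_of_le h1 with h | h
    · -- n + 1 = 1
      have hn : n = 0 := by omega
      subst hn
      rw [hP1]
      rw [le_div_iff₀ hut]
      nlinarith [hIR']
    · -- 2 ≤ n + 1
      have h2 : 2 ≤ n + 1 := h
      have hprev : P' n ≤ P n := by
        apply ih (by omega) (by omega)
      have hic := hIC' (n + 1) h2 hM'
      have hrec := hPrec (n + 1) h2 hM'
      simp only [Nat.add_sub_cancel] at hic hrec
      rw [hrec]
      have hdiv : P' (n + 1) - P' n ≤ θ (n + 1) * (R (n + 1) - R n) / (u₃ * that) := by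
        rw [le_div_iff₀ hut]; linarith [hic]
      linarith
end
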